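/- If A₁ and A₂ are strongly enforceable advice from state s₀ with horizon H in a finite MDP M, then their disjunction A₁ ∨ A₂ (satisfied by a path iff it satisfies A₁ or A₂) is also strongly enforceable from s₀ with horizon H, witnessed by the pointwise union of the two associated nondeterministic strategies. -/
import Mathlib


open Finset MeasureTheory Filter Asymptotics
open scoped BigOperators Classical ENNReal

noncomputable section

namespace PaperMCTS

variable {S A : Type}

/-- A (finite) Markov decision process: transition kernel `P`, reward `R`,
terminal reward `RT`. -/
structure MDP (S A : Type) where
  P : S → A → S → ℝ
  R : S → A → ℝ
  RT : S → ℝ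

/-- `P s a` is a probability distribution on states, for every `s, a`. -/
def MDP.IsProper [Fintype S] (M : MDP S A) : Prop :=
  (∀ s a s', 0 ≤ M.P s a s') ∧ ∀ s a, ∑ s', M.P s a s' = 1

/-- A path of length `i`: `i+1` states and `i` actions. -/
abbrev Path (S A : Type) (i : ℕ) : Type := (Fin (i + 1) → S) × (Fin i → A)

def Path.first {i : ℕ} (p : Path S A i) : S := p.1 0

def Path.lastState {i : ℕ} (p : Path S A i) : S := p.1 (Fin.last i)

/-- The prefix of length `j` of a path of length `i ≥ j`. -/
def Path.take {i : ℕ} (p : Path S A i) (j : ℕ) (h : j ≤ i) : Path S A j :=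
  (fun t => p.1 ⟨t, by have := t.isLt; omega⟩,
   fun t => p.2 ⟨t, by have := t.isLt; omega⟩)

/-- Extension of a path by one action and one state: `p · a s`. -/
def Path.snoc {i : ℕ} (p : Path S A i) (a : A) (s : S) : Path S A (i + 1) :=
  (fun t => if h : (t : ℕ) ≤ i then p.1 ⟨t, by omega⟩ else s,
   fun t => if h : (t : ℕ) < i then p.2 ⟨t, h⟩ else a)

/-- The path of length `0` at state `s`. -/
def constPath (s : S) : Path S A 0 := (fun _ => s, fun t => t.elim0)

/-- A path of the MDP: all stochastic steps have positive probability. -/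
def MDP.ValidPath (M : MDP S A) {i : ℕ} (p : Path S A i) : Prop :=
  ∀ t : Fin i, 0 < M.P (p.1 t.castSucc) (p.2 t) (p.1 t.succ)

/-- A (probabilistic) strategy maps every finite path to weights on actions. -/
def Strategy (S A : Type) : Type := ∀ i : ℕ, Path S A i → A → ℝ

def IsStrategy [Fintype A] (σ : Strategy S A) : Prop :=
  (∀ i p a, 0 ≤ σ i p a) ∧ ∀ i p, ∑ a, σ i p a = 1

/-- A strategy is deterministic if each of its distributions has singleton support. -/
def Deterministic (σ : Strategy S A) : Prop :=
  ∀ (i : ℕ) (p : Path S A i), ∃ a, ∀ b, (0 < σ i p b ↔ b = a)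

/-- Probability `Pr^i_{M,σ}(p) = ∏_t σ(p|_t)(a_t) · P(s_t,a_t)(s_{t+1})`. -/
def pathProb (M : MDP S A) (σ : Strategy S A) {i : ℕ} (p : Path S A i) : ℝ :=
  ∏ t : Fin i,
    σ t (Path.take p t t.isLt.le) (p.2 t) * M.P (p.1 t.castSucc) (p.2 t) (p.1 t.succ)

/-- Compatibility with a probabilistic strategy: all played actions are in the support. -/
def CompatStrat (σ : Strategy S A) {i : ℕ} (p : Path S A i) : Prop :=
  ∀ t : Fin i, 0 < σ t (Path.take p t t.isLt.le) (p.2 t)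

/-- Total reward of a path. -/
def pathReward (M : MDP S A) {i : ℕ} (p : Path S A i) : ℝ :=
  (∑ t : Fin i, M.R (p.1 t.castSucc) (p.2 t)) + M.RT (Path.lastState p)

/-- Expected total reward of strategy `σ` with horizon `i` from `s`. -/
def ValStrat [Fintype S] [Fintype A] (M : MDP S A) (σ : Strategy S A) (i : ℕ) (s : S) : ℝ :=
  ∑ p : Path S A i, if Path.first p = s then pathProb M σ p * pathReward M p else 0

/-- Optimal expected total reward of horizon `i` from `s`. -/
def MDP.Val [Fintype S] [Fintype A] (M : MDP S A) (i : ℕ) (s : S) : ℝ :=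
  ⨆ σ : {σ : Strategy S A // IsStrategy σ}, ValStrat M σ.1 i s

/-- Optimal actions: maximizers in the value-iteration recurrence (`opt^{k+1}`). -/
def MDP.optA [Fintype S] [Fintype A] (M : MDP S A) (k : ℕ) (s : S) : Set A :=
  {a | ∀ b, M.R s b + ∑ s', M.P s b s' * M.Val k s' ≤
        M.R s a + ∑ s', M.P s a s' * M.Val k s'}

/-- States of the depth-`H` tree unfolding: paths of length at most `H`. -/
abbrev UState (S A : Type) (H : ℕ) : Type := Σ i : Fin (H + 1), Path S A (i : ℕ)

def UState.root (H : ℕ) (s₀ : S) : UState S A H := ⟨⟨0, by omega⟩, constPath s₀⟩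

/-- Depth-`H` tree unfolding of an MDP (with self loops at the leaves). -/
def MDP.unfold (M : MDP S A) (H : ℕ) : MDP (UState S A H) A where
  P := fun q a q' =>
    if h : (q.1 : ℕ) < H then
      if q' = ⟨⟨(q.1 : ℕ) + 1, by omega⟩, Path.snoc q.2 a (Path.lastState q'.2)⟩ then
        M.P (Path.lastState q.2) a (Path.lastState q'.2)
      else 0
    else if q' = q then 1 else 0
  R := fun q a => if (q.1 : ℕ) < H then M.R (Path.lastState q.2) a else 0
  RT := fun q => M.RT (Path.lastState q.2)

/-- A symbolic advice: a predicate on finite paths. -/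
def Advice (S A : Type) : Type := ∀ i : ℕ, Path S A i → Prop

/-- A nondeterministic strategy. -/
def NStrategy (S A : Type) : Type := ∀ i : ℕ, Path S A i → Set A

/-- The nondeterministic strategy `σ_A^H` induced by an advice. -/
def advStrat (M : MDP S A) (Adv : Advice S A) (H : ℕ) : NStrategy S A := fun i p =>
  if h : i < H then
    {a | ∃ q : Path S A H, Adv H q ∧ Path.take q i h.le = p ∧ q.2 ⟨i, h⟩ = a ∧
      ∀ t : Fin H, i ≤ (t : ℕ) → 0 < M.P (q.1 t.castSucc) (q.2 t) (q.1 t.succ)}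
  else Set.univ

/-- The nondeterministic environment strategy `τ_A^H` induced by an advice. -/
def envStrat (M : MDP S A) (Adv : Advice S A) (H : ℕ) :
    ∀ i : ℕ, Path S A i → A → Set S := fun i p a =>
  if h : i < H then
    {s | 0 < M.P (Path.lastState p) a s ∧
      ∃ q : Path S A H, Adv H q ∧ Path.take q i h.le = p ∧ q.2 ⟨i, h⟩ = a ∧
        q.1 ⟨i + 1, by omega⟩ = s ∧
        ∀ t : Fin H, i ≤ (t : ℕ) → 0 < M.P (q.1 t.castSucc) (q.2 t) (q.1 t.succ)}
  else {s | 0 < M.P (Path.lastState p) a s}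

/-- Compatibility with a nondeterministic strategy. -/
def CompatN (σ : NStrategy S A) {i : ℕ} (p : Path S A i) : Prop :=
  ∀ t : Fin i, p.2 t ∈ σ t (Path.take p t t.isLt.le)

/-- Compatibility with a nondeterministic environment strategy. -/
def CompatE (τ : ∀ i : ℕ, Path S A i → A → Set S) {i : ℕ} (p : Path S A i) : Prop :=
  ∀ t : Fin i, p.1 t.succ ∈ τ t (Path.take p t t.isLt.le) (p.2 t)

/-- `FPaths^H_M(s₀, A)`: length-`H` paths of `M` from `s₀` satisfying the advice. -/
def FPathsAdv (M : MDP S A) (H : ℕ) (s₀ : S) (Adv : Advice S A) : Set (Path S A H) :=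
  {p | M.ValidPath p ∧ Path.first p = s₀ ∧ Adv H p}

/-- `FPaths^H_M(s₀, σ)` for a nondeterministic strategy. -/
def FPathsN (M : MDP S A) (H : ℕ) (s₀ : S) (σ : NStrategy S A) : Set (Path S A H) :=
  {p | M.ValidPath p ∧ Path.first p = s₀ ∧ CompatN σ p}

/-- `FPaths^H_M(s₀, τ)` for a nondeterministic environment strategy. -/
def FPathsE (M : MDP S A) (H : ℕ) (s₀ : S) (τ : ∀ i : ℕ, Path S A i → A → Set S) :
    Set (Path S A H) :=
  {p | M.ValidPath p ∧ Path.first p = s₀ ∧ CompatE τ p}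

/-- `σ` witnesses that `Adv` is strongly enforceable from `s₀` with horizon `H`. -/
def Enforces (M : MDP S A) (Adv : Advice S A) (s₀ : S) (H : ℕ) (σ : NStrategy S A) : Prop :=
  FPathsN M H s₀ σ = FPathsAdv M H s₀ Adv ∧
  ∀ (i : ℕ) (p : Path S A i), i < H → M.ValidPath p → Path.first p = s₀ →
    CompatN σ p → (σ i p).Nonempty

def StronglyEnforceable (M : MDP S A) (Adv : Advice S A) (s₀ : S) (H : ℕ) : Prop :=
  ∃ σ : NStrategy S A, Enforces M Adv s₀ H σ

/-- The pruned unfolding `T(M, s₀, H, A)`: transitions not compatible with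
`σ_A^H` or `τ_A^H` are removed. -/
def prunedUnfold (M : MDP S A) (Adv : Advice S A) (H : ℕ) : MDP (UState S A H) A where
  P := fun q a q' =>
    if (q.1 : ℕ) < H then
      if a ∈ advStrat M Adv H (q.1 : ℕ) q.2 ∧
          Path.lastState q'.2 ∈ envStrat M Adv H (q.1 : ℕ) q.2 a then
        (M.unfold H).P q a q'
      else 0
    else (M.unfold H).P q a q'
  R := (M.unfold H).R
  RT := (M.unfold H).RT

/-- The optimality assumption: every horizon-`H` optimal deterministic strategy is
contained in `σ_A^H`. -/
def OptAssumption [Fintype S] [Fintype A] (M : MDP S A) (Adv : Advice S A) (H : ℕ) : Prop :=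
  ∀ (s : S) (σ : Strategy S A), IsStrategy σ → Deterministic σ →
    ValStrat M σ H s = M.Val H s →
    ∀ (i : ℕ) (p : Path S A i) (a : A), 0 < σ i p a → a ∈ advStrat M Adv H i p

/-- Actions achievable as the first action of some (deterministic) strategy attaining
the optimal expected total reward of horizon `H` at `s`. -/
def optFirst {T : Type} [Fintype T] [Fintype A] (N : MDP T A) (H : ℕ) (s : T) : Set A :=
  {a | ∃ σ : Strategy T A, IsStrategy σ ∧ Deterministic σ ∧
    ValStrat N σ H s = N.Val H s ∧ 0 < σ 0 (constPath s) a}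

/-- All total rewards of paths of length at most `H` lie in `[0,1]`. -/
def BoundedRewards (M : MDP S A) (H : ℕ) : Prop :=
  ∀ (i : ℕ) (p : Path S A i), i ≤ H → pathReward M p ∈ Set.Icc (0 : ℝ) 1

/-- `WinsAux M T k i h p` says: from the node `p` (of depth `i = H - k`), the
alternation `∃a ∀s ∃a ∀s … ∀s_last` can force reaching a length-`H` path in `T`,
states being quantified over the support of the current transition. -/
def WinsAux (M : MDP S A) {H : ℕ} (T : Path S A H → Prop) :
    (k : ℕ) → (i : ℕ) → i + k = H → Path S A i → Prop
  | 0, i, h, p => T ((show i = H by omega) ▸ p)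
  | k + 1, i, h, p =>
      ∃ a : A, ∀ s : S, 0 < M.P (Path.lastState p) a s →
        WinsAux M T k (i + 1) (by omega) (Path.snoc p a s)

/-- `Adv'` is the strongly enforceable advice extracted from `Adv` (greatest
strongly enforceable advice below `Adv`, from `s₀` with horizon `H`). -/
def ExtractedFrom (M : MDP S A) (Adv Adv' : Advice S A) (s₀ : S) (H : ℕ) : Prop :=
  StronglyEnforceable M Adv' s₀ H ∧
  FPathsAdv M H s₀ Adv' ⊆ FPathsAdv M H s₀ Adv ∧
  ∀ Adv'' : Advice S A, StronglyEnforceable M Adv'' s₀ H →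
    FPathsAdv M H s₀ Adv'' ⊆ FPathsAdv M H s₀ Adv →
    FPathsAdv M H s₀ Adv'' ⊆ FPathsAdv M H s₀ Adv'

/-- Player 1 can enforce, from node `p` of depth `i`, that every continuation
following some deterministic action-selection `f` (against arbitrary stochastic
successors in the support) reaches the target set `T` of leaves. -/
def CanEnforce (M : MDP S A) {H : ℕ} (T : Set (Path S A H)) (i : ℕ) (hi : i ≤ H)
    (p : Path S A i) : Prop :=
  ∃ f : ∀ j : ℕ, Path S A j → A,
    ∀ q : Path S A H, Path.take q i hi = p →
      (∀ t : Fin H, i ≤ (t : ℕ) → q.2 t = f t (Path.take q t t.isLt.le)) →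
      (∀ t : Fin H, i ≤ (t : ℕ) → 0 < M.P (q.1 t.castSucc) (q.2 t) (q.1 t.succ)) →
      q ∈ T

/-- The advice whose satisfied length-`H` paths are exactly the paths to `T`
remaining within winning nodes. -/
def winAdvice (M : MDP S A) {H : ℕ} (T : Set (Path S A H)) : Advice S A :=
  fun j q => ∀ h : j = H, (h ▸ q) ∈ T ∧
    ∀ (t : ℕ) (ht : t ≤ H), CanEnforce M T t ht (Path.take (h ▸ q) t ht)

/-- The uniform strategy. -/
def uniformStrategy (S A : Type) [Fintype A] : Strategy S A :=
  fun _ _ _ => 1 / (Fintype.card A : ℝ)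

end PaperMCTS

end
namespace PaperMCTS

section Aux

variable {S A : Type}

lemma Path.take_fst {n m : ℕ} (q : Path S A n) (h : m ≤ n) (k : ℕ) (hk : k < m + 1)
    (hk' : k < n + 1) : (Path.take q m h).1 ⟨k, hk⟩ = q.1 ⟨k, hk'⟩ := rfl

lemma Path.take_snd {n m : ℕ} (q : Path S A n) (h : m ≤ n) (k : ℕ) (hk : k < m)
    (hk' : k < n) : (Path.take q m h).2 ⟨k, hk⟩ = q.2 ⟨k, hk'⟩ := rfl

lemma fst_congr {n : ℕ} (p : Path S A n) {i j : Fin (n+1)} (h : (i : ℕ) = (j : ℕ)) :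
    p.1 i = p.1 j := congrArg p.1 (Fin.ext h)

lemma snd_congr {n : ℕ} (p : Path S A n) {i j : Fin n} (h : (i : ℕ) = (j : ℕ)) :
    p.2 i = p.2 j := congrArg p.2 (Fin.ext h)

lemma Path.take_take {n : ℕ} (p : Path S A n) {j t : ℕ} (hj : j ≤ t) (ht : t ≤ n) :
    Path.take (Path.take p t ht) j hj = Path.take p j (hj.trans ht) := rfl

lemma Path.take_self {n : ℕ} (p : Path S A n) (h : n ≤ n) : Path.take p n h = p := by
  apply Prod.ext <;> funext t <;> simp [Path.take]

lemma MDP.valid_take (M : MDP S A) {n : ℕ} {p : Path S A n} (hp : M.ValidPath p)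
    {j : ℕ} (h : j ≤ n) : M.ValidPath (Path.take p j h) := by
  intro t
  have e1 : (Path.take p j h).1 t.castSucc = p.1 ((⟨(t : ℕ), by omega⟩ : Fin n).castSucc) :=
    (fst_congr _ (i := t.castSucc) (j := ⟨(t : ℕ), by omega⟩) rfl).trans
      ((Path.take_fst p h t (by omega) (by omega)).trans (fst_congr p rfl))
  have e2 : (Path.take p j h).1 t.succ = p.1 ((⟨(t : ℕ), by omega⟩ : Fin n).succ) :=
    (fst_congr _ (i := t.succ) (j := ⟨(t : ℕ)+1, by omega⟩) rfl).trans
      ((Path.take_fst p h ((t : ℕ)+1) (by omega) (by omega)).trans (fst_congr p rfl))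
  have e3 : (Path.take p j h).2 t = p.2 ⟨(t : ℕ), by omega⟩ :=
    (snd_congr _ (i := t) (j := ⟨(t : ℕ), by omega⟩) rfl).trans
      (Path.take_snd p h t (by omega) (by omega))
  rw [e1, e2, e3]; exact hp _

lemma Path.first_take {n : ℕ} (p : Path S A n) {j : ℕ} (h : j ≤ n) :
    Path.first (Path.take p j h) = Path.first p := by
  show (Path.take p j h).1 0 = p.1 0
  rw [show (0 : Fin (j+1)) = ⟨0, by omega⟩ from rfl, Path.take_fst p h 0 (by omega) (by omega)]
  exact fst_congr p rfl

/-- Back-closure: if the action at step `t` of a valid path is allowed by `advStrat`,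
then so are all earlier actions. -/
lemma mem_advStrat_of_le (M : MDP S A) (Adv : Advice S A) {H n : ℕ} (hn : n ≤ H)
    {p : Path S A n} (hp : M.ValidPath p) {t : Fin n}
    (ht : p.2 t ∈ advStrat M Adv H (t : ℕ) (Path.take p (t : ℕ) t.isLt.le))
    {j : Fin n} (hj : (j : ℕ) ≤ (t : ℕ)) :
    p.2 j ∈ advStrat M Adv H (j : ℕ) (Path.take p (j : ℕ) j.isLt.le) := by
  have htH : (t : ℕ) < H := lt_of_lt_of_le t.isLt hn
  have hjH : (j : ℕ) < H := lt_of_le_of_lt hj htH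
  rw [advStrat, dif_pos htH] at ht
  rw [advStrat, dif_pos hjH]
  obtain ⟨q, hAdv, hq, hact, hval⟩ := ht
  refine ⟨q, hAdv, ?_, ?_, ?_⟩
  · rw [← Path.take_take q hj htH.le, hq, Path.take_take]
  · rcases lt_or_eq_of_le hj with h | h
    · have e := congrFun (congrArg Prod.snd hq) ⟨(j : ℕ), h⟩
      rw [Path.take_snd q htH.le j h (by omega), Path.take_snd p t.isLt.le j h (by omega)] at e
      exact e.trans (snd_congr p rfl)
    · rw [show (⟨(j : ℕ), hjH⟩ : Fin H) = ⟨(t : ℕ), htH⟩ from Fin.ext h, hact]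
      exact snd_congr p h.symm
  · intro u hu
    rcases lt_or_ge (u : ℕ) (t : ℕ) with h | h
    · have e1 : q.1 u.castSucc = p.1 ((⟨(u : ℕ), by omega⟩ : Fin n).castSucc) := by
        have e := congrFun (congrArg Prod.fst hq) ⟨(u : ℕ), by omega⟩
        rw [Path.take_fst q htH.le u (by omega) (by omega),
          Path.take_fst p t.isLt.le u (by omega) (by omega)] at e
        exact ((fst_congr q rfl).trans e).trans (fst_congr p rfl)
      have e2 : q.1 u.succ = p.1 ((⟨(u : ℕ), by omega⟩ : Fin n).succ) := by
        have e := congrFun (congrArg Prod.fst hq) ⟨(u : ℕ) + 1, by omega⟩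
        rw [Path.take_fst q htH.le ((u : ℕ)+1) (by omega) (by omega),
          Path.take_fst p t.isLt.le ((u : ℕ)+1) (by omega) (by omega)] at e
        exact ((fst_congr q rfl).trans e).trans (fst_congr p rfl)
      have e3 : q.2 u = p.2 ⟨(u : ℕ), by omega⟩ := by
        have e := congrFun (congrArg Prod.snd hq) ⟨(u : ℕ), h⟩
        rw [Path.take_snd q htH.le u h (by omega),
          Path.take_snd p t.isLt.le u h (by omega)] at e
        exact ((snd_congr q rfl).trans e).trans (snd_congr p rfl)
      rw [e1, e2, e3]
      exact hp _
    · exact hval u h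

lemma valid_of_witness (M : MDP S A) {H i : ℕ} (hi : i < H) {p : Path S A i}
    (hp : M.ValidPath p) {q : Path S A H} (hq : Path.take q i hi.le = p)
    (hval : ∀ t : Fin H, i ≤ (t : ℕ) → 0 < M.P (q.1 t.castSucc) (q.2 t) (q.1 t.succ)) :
    M.ValidPath q := by
  intro u
  rcases lt_or_ge (u : ℕ) i with h | h
  · have e1 : q.1 u.castSucc = p.1 ((⟨(u : ℕ), by omega⟩ : Fin i).castSucc) := by
      have e := congrFun (congrArg Prod.fst hq) ⟨(u : ℕ), by omega⟩
      rw [Path.take_fst q hi.le u (by omega) (by omega)] at e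
      exact ((fst_congr q rfl).trans e).trans (fst_congr p rfl)
    have e2 : q.1 u.succ = p.1 ((⟨(u : ℕ), by omega⟩ : Fin i).succ) := by
      have e := congrFun (congrArg Prod.fst hq) ⟨(u : ℕ) + 1, by omega⟩
      rw [Path.take_fst q hi.le ((u : ℕ)+1) (by omega) (by omega)] at e
      exact ((fst_congr q rfl).trans e).trans (fst_congr p rfl)
    have e3 : q.2 u = p.2 ⟨(u : ℕ), by omega⟩ := by
      have e := congrFun (congrArg Prod.snd hq) ⟨(u : ℕ), h⟩
      rw [Path.take_snd q hi.le u h (by omega)] at e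
      exact ((snd_congr q rfl).trans e).trans (snd_congr p rfl)
    rw [e1, e2, e3]
    exact hp _
  · exact hval u h

lemma first_of_take_eq {n m : ℕ} {q : Path S A n} {p : Path S A m} {h : m ≤ n}
    (hq : Path.take q m h = p) : Path.first q = Path.first p := by
  rw [← hq, Path.first_take]

/-- If `σ` enforces `Adv`, then `σ` contains `advStrat` on valid paths from `s₀`. -/
lemma mem_enforcing_strat (M : MDP S A) {Adv : Advice S A} {s₀ : S} {H : ℕ}
    {σ : NStrategy S A} (hσ : Enforces M Adv s₀ H σ) {i : ℕ} (hi : i < H) {p : Path S A i}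
    (hp : M.ValidPath p) (h0 : Path.first p = s₀) {a : A}
    (ha : a ∈ advStrat M Adv H i p) : a ∈ σ i p := by
  rw [advStrat, dif_pos hi] at ha
  obtain ⟨q, hAdv, hq, hact, hval⟩ := ha
  have hqv : M.ValidPath q := valid_of_witness M hi hp hq hval
  have hq0 : Path.first q = s₀ := (first_of_take_eq hq).trans h0
  have hqmem : q ∈ FPathsN M H s₀ σ := by
    rw [hσ.1]; exact ⟨hqv, hq0, hAdv⟩
  have hcomp := hqmem.2.2 ⟨i, hi⟩
  rw [hact, hq] at hcomp
  exact hcomp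

lemma Path.take_snoc {i : ℕ} (p : Path S A i) (a : A) (s : S) (h : i ≤ i + 1) :
    Path.take (Path.snoc p a s) i h = p := by
  apply Prod.ext
  · funext t
    have ht : (t : ℕ) ≤ i := by omega
    show (Path.snoc p a s).1 ⟨(t : ℕ), by omega⟩ = p.1 t
    rw [Path.snoc]
    simp only
    rw [dif_pos ht]
  · funext t
    have ht : (t : ℕ) < i := t.isLt
    show (Path.snoc p a s).2 ⟨(t : ℕ), by omega⟩ = p.2 t
    rw [Path.snoc]
    simp only
    rw [dif_pos ht]

lemma Path.first_snoc {i : ℕ} (p : Path S A i) (a : A) (s : S) :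
    Path.first (Path.snoc p a s) = Path.first p := by
  show (Path.snoc p a s).1 0 = p.1 0
  rw [Path.snoc]
  simp only
  rw [dif_pos (by simp : ((0 : Fin (i+1+1)) : ℕ) ≤ i)]
  exact fst_congr p rfl

lemma MDP.valid_snoc (M : MDP S A) {i : ℕ} {p : Path S A i} (hp : M.ValidPath p)
    {a : A} {s : S} (hs : 0 < M.P (Path.lastState p) a s) :
    M.ValidPath (Path.snoc p a s) := by
  intro t
  obtain ⟨tv, htv⟩ := t
  rcases lt_or_eq_of_le (Nat.lt_succ_iff.mp htv) with h | h
  · have e1 : (Path.snoc p a s).1 (⟨tv, htv⟩ : Fin (i+1)).castSucc =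
        p.1 ((⟨tv, h⟩ : Fin i).castSucc) := by
      rw [Path.snoc]; simp only
      rw [dif_pos (show ((⟨tv, htv⟩ : Fin (i+1)).castSucc : ℕ) ≤ i by simp; omega)]
      exact fst_congr p rfl
    have e2 : (Path.snoc p a s).1 (⟨tv, htv⟩ : Fin (i+1)).succ =
        p.1 ((⟨tv, h⟩ : Fin i).succ) := by
      rw [Path.snoc]; simp only
      rw [dif_pos (show ((⟨tv, htv⟩ : Fin (i+1)).succ : ℕ) ≤ i by simp; omega)]
      exact fst_congr p rfl
    have e3 : (Path.snoc p a s).2 ⟨tv, htv⟩ = p.2 ⟨tv, h⟩ := by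
      rw [Path.snoc]; simp only
      rw [dif_pos (show ((⟨tv, htv⟩ : Fin (i+1)) : ℕ) < i from h)]
    rw [e1, e2, e3]
    exact hp _
  · subst h
    have e1 : (Path.snoc p a s).1 (⟨tv, htv⟩ : Fin (tv+1)).castSucc = Path.lastState p := by
      rw [Path.snoc]; simp only
      rw [dif_pos (show ((⟨tv, htv⟩ : Fin (tv+1)).castSucc : ℕ) ≤ tv by simp)]
      exact fst_congr p (by simp [Fin.last])
    have e2 : (Path.snoc p a s).1 (⟨tv, htv⟩ : Fin (tv+1)).succ = s := by
      rw [Path.snoc]; simp only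
      rw [dif_neg (show ¬ ((⟨tv, htv⟩ : Fin (tv+1)).succ : ℕ) ≤ tv by simp)]
    have e3 : (Path.snoc p a s).2 ⟨tv, htv⟩ = a := by
      rw [Path.snoc]; simp only
      rw [dif_neg (show ¬ ((⟨tv, htv⟩ : Fin (tv+1)) : ℕ) < tv by simp)]
    rw [e1, e2, e3]
    exact hs

lemma compat_snoc {σ : NStrategy S A} {i : ℕ} {p : Path S A i} (hp : CompatN σ p)
    {a : A} (ha : a ∈ σ i p) (s : S) : CompatN σ (Path.snoc p a s) := by
  intro t
  obtain ⟨tv, htv⟩ := t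
  rcases lt_or_eq_of_le (Nat.lt_succ_iff.mp htv) with h | h
  · have e2 : (Path.snoc p a s).2 ⟨tv, htv⟩ = p.2 ⟨tv, h⟩ := by
      rw [Path.snoc]; simp only
      rw [dif_pos (show ((⟨tv, htv⟩ : Fin (i+1)) : ℕ) < i from h)]
    have e1 : Path.take (Path.snoc p a s) ((⟨tv, htv⟩ : Fin (i+1)) : ℕ)
        (⟨tv, htv⟩ : Fin (i+1)).isLt.le = Path.take p tv h.le := by
      rw [← Path.take_take (Path.snoc p a s) h.le (by omega : i ≤ i + 1),
        Path.take_snoc]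
    rw [e2, e1]
    exact hp ⟨tv, h⟩
  · subst h
    have e2 : (Path.snoc p a s).2 ⟨tv, htv⟩ = a := by
      rw [Path.snoc]; simp only
      rw [dif_neg (show ¬ ((⟨tv, htv⟩ : Fin (tv+1)) : ℕ) < tv by simp)]
    have e1 : Path.take (Path.snoc p a s) ((⟨tv, htv⟩ : Fin (tv+1)) : ℕ)
        (⟨tv, htv⟩ : Fin (tv+1)).isLt.le = p := Path.take_snoc p a s _
    rw [e2, e1]
    exact ha

/-- Any valid compatible path can be extended to a full path satisfying the advice. -/
lemma exists_extension [Fintype S] {M : MDP S A} (hM : M.IsProper) {Adv : Advice S A}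
    {s₀ : S} {H : ℕ} {σ : NStrategy S A} (hσ : Enforces M Adv s₀ H σ) (k : ℕ) :
    ∀ (i : ℕ) (hik : i + k = H) (p : Path S A i), M.ValidPath p → Path.first p = s₀ →
      CompatN σ p →
      ∃ q : Path S A H, q ∈ FPathsAdv M H s₀ Adv ∧ Path.take q i (by omega) = p := by
  induction k with
  | zero =>
    intro i hik p hp h0 hc
    have hiH : i = H := by omega
    subst hiH
    refine ⟨p, ?_, Path.take_self p le_rfl⟩
    rw [← hσ.1]
    exact ⟨hp, h0, hc⟩
  | succ k ih =>
    intro i hik p hp h0 hc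
    have hi : i < H := by omega
    obtain ⟨a, ha⟩ := hσ.2 i p hi hp h0 hc
    obtain ⟨s, hs⟩ : ∃ s, 0 < M.P (Path.lastState p) a s := by
      by_contra hno
      push_neg at hno
      have h1 : ∑ s', M.P (Path.lastState p) a s' ≤ 0 :=
        Finset.sum_nonpos (fun s' _ => hno s')
      have h2 := hM.2 (Path.lastState p) a
      linarith
    obtain ⟨q, hqmem, hqtake⟩ := ih (i+1) (by omega) (Path.snoc p a s)
      (M.valid_snoc hp hs) ((Path.first_snoc p a s).trans h0) (compat_snoc hc ha s)
    refine ⟨q, hqmem, ?_⟩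
    rw [← Path.take_take q (Nat.le_succ i) (by omega : i + 1 ≤ H), hqtake,
      Path.take_snoc]

/-- A strongly enforceable advice is enforced by its induced strategy `advStrat`. -/
lemma enforces_advStrat [Fintype S] {M : MDP S A} (hM : M.IsProper) {Adv : Advice S A}
    {s₀ : S} {H : ℕ} (h : StronglyEnforceable M Adv s₀ H) :
    Enforces M Adv s₀ H (advStrat M Adv H) := by
  obtain ⟨σ, hσ⟩ := h
  constructor
  · ext p
    constructor
    · rintro ⟨hp, h0, hc⟩
      have hcσ : CompatN σ p := fun t =>
        mem_enforcing_strat M hσ t.isLt (M.valid_take hp _)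
          ((Path.first_take p _).trans h0) (hc t)
      have hmem : p ∈ FPathsN M H s₀ σ := ⟨hp, h0, hcσ⟩
      rw [hσ.1] at hmem
      exact hmem
    · rintro ⟨hp, h0, hAdv⟩
      refine ⟨hp, h0, fun t => ?_⟩
      rw [advStrat, dif_pos t.isLt]
      exact ⟨p, hAdv, rfl, snd_congr p rfl, fun u _ => hp u⟩
  · intro i p hi hp h0 hc
    have hcσ : CompatN σ p := fun t =>
      mem_enforcing_strat M hσ (t.isLt.trans hi) (M.valid_take hp _)
        ((Path.first_take p _).trans h0) (hc t)
    obtain ⟨q, hqmem, hqtake⟩ := exists_extension hM hσ (H - i) i (by omega) p hp h0 hcσ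
    refine ⟨q.2 ⟨i, hi⟩, ?_⟩
    rw [advStrat, dif_pos hi]
    exact ⟨q, hqmem.2.2, hqtake, rfl, fun u _ => hqmem.1 u⟩

end Aux

/-- the disjunction of two strongly enforceable advice is strongly
enforceable, witnessed by the pointwise union of the associated strategies. -/
theorem union_strongly_enforceable [Fintype S] (M : MDP S A) (hM : M.IsProper)
    (A₁ A₂ : Advice S A) (s₀ : S) (H : ℕ)
    (h₁ : StronglyEnforceable M A₁ s₀ H) (h₂ : StronglyEnforceable M A₂ s₀ H) :
    StronglyEnforceable M (fun i p => A₁ i p ∨ A₂ i p) s₀ H ∧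
      Enforces M (fun i p => A₁ i p ∨ A₂ i p) s₀ H
        (fun i p => advStrat M A₁ H i p ∪ advStrat M A₂ H i p) := by
  have E₁ := enforces_advStrat hM h₁
  have E₂ := enforces_advStrat hM h₂
  have key : Enforces M (fun i p => A₁ i p ∨ A₂ i p) s₀ H
      (fun i p => advStrat M A₁ H i p ∪ advStrat M A₂ H i p) := by
    constructor
    · ext p
      constructor
      · rintro ⟨hp, h0, hc⟩
        rcases Nat.eq_zero_or_pos H with hH | hH
        · subst hH
          have hmem : p ∈ FPathsN M 0 s₀ (advStrat M A₁ 0) :=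
            ⟨hp, h0, fun t => t.elim0⟩
          rw [E₁.1] at hmem
          exact ⟨hp, h0, Or.inl hmem.2.2⟩
        · have ht0 := hc ⟨H - 1, by omega⟩
          rcases ht0 with h | h
          · have hcomp : CompatN (advStrat M A₁ H) p := fun j =>
              mem_advStrat_of_le M A₁ le_rfl hp h
                (by have := j.isLt; simpa using by omega)
            have hmem : p ∈ FPathsN M H s₀ (advStrat M A₁ H) := ⟨hp, h0, hcomp⟩
            rw [E₁.1] at hmem
            exact ⟨hp, h0, Or.inl hmem.2.2⟩
          · have hcomp : CompatN (advStrat M A₂ H) p := fun j =>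
              mem_advStrat_of_le M A₂ le_rfl hp h
                (by have := j.isLt; simpa using by omega)
            have hmem : p ∈ FPathsN M H s₀ (advStrat M A₂ H) := ⟨hp, h0, hcomp⟩
            rw [E₂.1] at hmem
            exact ⟨hp, h0, Or.inr hmem.2.2⟩
      · rintro ⟨hp, h0, hAdv⟩
        rcases hAdv with h | h
        · have hmem : p ∈ FPathsAdv M H s₀ A₁ := ⟨hp, h0, h⟩
          rw [← E₁.1] at hmem
          exact ⟨hp, h0, fun t => Or.inl (hmem.2.2 t)⟩
        · have hmem : p ∈ FPathsAdv M H s₀ A₂ := ⟨hp, h0, h⟩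
          rw [← E₂.1] at hmem
          exact ⟨hp, h0, fun t => Or.inr (hmem.2.2 t)⟩
    · intro i p hi hp h0 hc
      rcases Nat.eq_zero_or_pos i with hi0 | hi0
      · subst hi0
        have hc1 : CompatN (advStrat M A₁ H) p := fun t => t.elim0
        obtain ⟨a, ha⟩ := E₁.2 0 p hi hp h0 hc1
        exact ⟨a, Or.inl ha⟩
      · have ht0 := hc ⟨i - 1, by omega⟩
        rcases ht0 with h | h
        · have hcomp : CompatN (advStrat M A₁ H) p := fun j =>
            mem_advStrat_of_le M A₁ hi.le hp h
              (by have := j.isLt; simpa using by omega)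
          obtain ⟨a, ha⟩ := E₁.2 i p hi hp h0 hcomp
          exact ⟨a, Or.inl ha⟩
        · have hcomp : CompatN (advStrat M A₂ H) p := fun j =>
            mem_advStrat_of_le M A₂ hi.le hp h
              (by have := j.isLt; simpa using by omega)
          obtain ⟨a, ha⟩ := E₂.2 i p hi hp h0 hcomp
          exact ⟨a, Or.inr ha⟩
  exact ⟨⟨_, key⟩, key⟩
end PaperMCTS
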